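/- The sum Σ_{i∈S} π(i) is at most 1/θ. -/

import Mathlib

open scoped Classical
open Finset

/-- A finite tree-structured Markov chain: a finite state space partitioned into
levels `0, …, L-1`, a root `r` at level `0`, a parent map `pa` (with `pa r = r` by
convention), and transition probabilities `p i ∈ (0,1]` of being reached from the
parent, with `p r = 1`. -/
structure TreeMC (S : Type*) [Fintype S] [DecidableEq S] where
  /-- the number of levels -/
  L : ℕ
  /-- the root -/
  r : S
  /-- the parent map (with `pa r = r` by convention) -/
  pa : S → S
  /-- the level of each state -/
  level : S → ℕ
  /-- the probability of being reached from the parent -/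
  p : S → ℝ
  level_lt : ∀ i, level i < L
  level_r : level r = 0
  root_unique : ∀ i, level i = 0 → i = r
  pa_r : pa r = r
  level_pa : ∀ i, i ≠ r → level (pa i) + 1 = level i
  p_pos : ∀ i, 0 < p i
  p_le_one : ∀ i, p i ≤ 1
  p_r : p r = 1

namespace TreeMC

variable {S : Type*} [Fintype S] [DecidableEq S] (M : TreeMC S)

/-- The ancestors of `i`: states on the path from the root to `i` (both included). -/
noncomputable def anc (i : S) : Finset S :=
  Finset.univ.filter fun a => ∃ n : ℕ, M.pa^[n] i = a

/-- The subtree of `i`: all states having `i` as an ancestor. -/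
noncomputable def subt (i : S) : Finset S :=
  Finset.univ.filter fun k => i ∈ M.anc k

/-- The subtree of a set of states. -/
noncomputable def subF (X : Finset S) : Finset S :=
  Finset.univ.filter fun k => ∃ i ∈ X, k ∈ M.subt i

/-- `π i`: the probability that a job passes through state `i`. -/
noncomputable def pi (i : S) : ℝ :=
  ∏ a ∈ M.anc i, M.p a

/-- The children of `i`. -/
noncomputable def child (i : S) : Finset S :=
  Finset.univ.filter fun k => k ≠ M.r ∧ M.pa k = i

/-- `T` is the top set of `X`: a subset of `X` whose subtree covers `X` and in which
no state lies in the subtree of a different state. -/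
def IsTopSet (X T : Finset S) : Prop :=
  T ⊆ X ∧ X ⊆ M.subF T ∧ ∀ i ∈ T, ∀ k ∈ T, i ≠ k → k ∉ M.subt i

/-- Expected future cost conditional on being in state `a`. -/
noncomputable def cf (c : S → ℝ) (a : S) : ℝ :=
  ∑ i ∈ M.subt a, c i * M.pi i / M.pi a

/-- `V` is the ski-rental value function:
`V γ i = min (γ, c i + Σ_{k ∈ child i} p k · V γ k)`. -/
def IsSkiValue (c : S → ℝ) (V : ℝ → S → ℝ) : Prop :=
  ∀ γ : ℝ, ∀ i : S, V γ i = min γ (c i + ∑ k ∈ M.child i, M.p k * V γ k)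

/-- Expected future cost-to-go `V^f`. -/
noncomputable def Vf (V : ℝ → S → ℝ) (γ : ℝ) (i : S) : ℝ :=
  ∑ k ∈ M.child i, M.p k * V γ k

/-- The candidate optimal state duals `β*(γ)`. -/
noncomputable def betaStar (c : S → ℝ) (V : ℝ → S → ℝ) (γ : ℝ) (i : S) : ℝ :=
  max 0 (c i + M.Vf V γ i - γ)

/-- Feasibility for the dual program `D*(γ)`. -/
def DualFeasible (c : S → ℝ) (γ : ℝ) (β : S → ℝ) : Prop :=
  (∀ i, 0 ≤ β i) ∧ ∀ a, M.cf c a ≤ γ + ∑ i ∈ M.subt a, β i * M.pi i / M.pi a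

/-- Feasibility for the fluid LP (OriginalFluid). -/
def OrigFeasible (lam mu : ℝ) (q ν : S → ℝ) : Prop :=
  (∀ i, 0 ≤ q i) ∧ (∀ i, 0 ≤ ν i) ∧ q M.r = lam ∧
    (∀ i, i ≠ M.r → q i = (q (M.pa i) - ν (M.pa i)) * M.p i) ∧
    (∀ i, ν i ≤ q i) ∧ ∑ i : S, ν i ≤ mu

/-- Feasibility for the fluid LP (SimplerFluid). -/
def SimpFeasible (lam mu : ℝ) (ν : S → ℝ) : Prop :=
  (∀ i, 0 ≤ ν i) ∧ (∀ i, ∑ a ∈ M.anc i, ν a * M.pi i / M.pi a ≤ lam * M.pi i) ∧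
    ∑ i : S, ν i ≤ mu

end TreeMC

/-!
Every state `i` hands on to its children the mass `Σ_{k ∈ child i} π k = (Σ_{k ∈ child i} p k) π i`,
which is at most `(1 - θ) π i`. Every state except the root is the child of exactly one state and
`π r = 1`, so summing over `i` gives `Σ π - 1 ≤ (1 - θ) Σ π`, that is `θ Σ π ≤ 1`.
-/

namespace TreeMC

variable {S : Type*} [Fintype S] [DecidableEq S] (M : TreeMC S)

lemma level_pa_le (i : S) : M.level (M.pa i) ≤ M.level i := by
  by_cases h : i = M.r
  · rw [h, M.pa_r]
  · have := M.level_pa i h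
    omega

lemma level_iterate_pa_le (n : ℕ) (i : S) : M.level (M.pa^[n] i) ≤ M.level i := by
  induction n with
  | zero => rfl
  | succ n ih => rw [Function.iterate_succ_apply']; exact (M.level_pa_le _).trans ih

lemma level_le_of_mem_anc {a i : S} (h : a ∈ M.anc i) : M.level a ≤ M.level i := by
  obtain ⟨n, rfl⟩ := (mem_filter.mp h).2
  exact M.level_iterate_pa_le n i

lemma self_notMem_anc_pa {i : S} (hi : i ≠ M.r) : i ∉ M.anc (M.pa i) := fun h => by
  have := M.level_le_of_mem_anc h
  have := M.level_pa i hi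
  omega

lemma anc_root : M.anc M.r = {M.r} := by
  ext a
  simp only [anc, mem_filter, mem_univ, true_and, mem_singleton, Function.iterate_fixed M.pa_r]
  exact ⟨fun ⟨_, h⟩ => h.symm, fun h => ⟨0, h.symm⟩⟩

lemma anc_eq_insert_anc_pa {i : S} (hi : i ≠ M.r) : M.anc i = insert i (M.anc (M.pa i)) := by
  ext a
  simp only [anc, mem_filter, mem_univ, true_and, mem_insert]
  constructor
  · rintro ⟨_ | n, rfl⟩
    · exact .inl rfl
    · exact .inr ⟨n, (Function.iterate_succ_apply _ _ _).symm⟩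
  · rintro (rfl | ⟨n, rfl⟩)
    · exact ⟨0, rfl⟩
    · exact ⟨n + 1, Function.iterate_succ_apply _ _ _⟩

lemma pi_root : M.pi M.r = 1 := by simp [pi, anc_root, M.p_r]

lemma pi_eq_p_mul_pi_pa {i : S} (hi : i ≠ M.r) : M.pi i = M.p i * M.pi (M.pa i) := by
  rw [pi, M.anc_eq_insert_anc_pa hi, prod_insert (M.self_notMem_anc_pa hi), pi]

lemma pi_pos (i : S) : 0 < M.pi i :=
  prod_pos fun a _ => M.p_pos a

lemma sum_pi_child (i : S) : ∑ k ∈ M.child i, M.pi k = (∑ k ∈ M.child i, M.p k) * M.pi i := by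
  rw [sum_mul]
  refine sum_congr rfl fun k hk => ?_
  obtain ⟨hkr, rfl⟩ := (mem_filter.mp hk).2
  exact M.pi_eq_p_mul_pi_pa hkr

lemma sum_sum_pi_child : ∑ i : S, ∑ k ∈ M.child i, M.pi k = ∑ i : S, M.pi i - 1 := by
  have hchild (i : S) : M.child i = {k ∈ univ.erase M.r | M.pa k = i} := by
    ext k; simp [child]
  simp only [hchild, sum_fiberwise]
  rw [← add_sum_erase univ M.pi (mem_univ M.r), M.pi_root]
  ring

lemma mul_sum_pi_le_one {θ : ℝ} (hθ : ∀ i, θ ≤ 1 - ∑ k ∈ M.child i, M.p k) :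
    θ * ∑ i : S, M.pi i ≤ 1 := by
  have hmass (i : S) : θ * M.pi i ≤ M.pi i - ∑ k ∈ M.child i, M.pi k := by
    rw [M.sum_pi_child]
    linarith [mul_le_mul_of_nonneg_right (hθ i) (M.pi_pos i).le]
  calc θ * ∑ i : S, M.pi i
      ≤ ∑ i : S, (M.pi i - ∑ k ∈ M.child i, M.pi k) := by
        rw [mul_sum]; exact sum_le_sum fun i _ => hmass i
    _ = 1 := by rw [sum_sub_distrib, M.sum_sum_pi_child]; ring

end TreeMC

/-- `Σ_{i ∈ S} π(i) ≤ 1/θ`, where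
`θ = min_{i ∈ S} (1 − Σ_{k ∈ child(i)} p(k)) > 0`. -/
theorem total_mass_le_inv_theta {S : Type*} [Fintype S] [DecidableEq S]
    (M : TreeMC S) (θ : ℝ)
    (hθdef : θ = Finset.univ.inf' ⟨M.r, Finset.mem_univ M.r⟩
      (fun i => 1 - ∑ k ∈ M.child i, M.p k))
    (hθpos : 0 < θ) :
    ∑ i : S, M.pi i ≤ 1 / θ := by
  have hθ (i : S) : θ ≤ 1 - ∑ k ∈ M.child i, M.p k :=
    hθdef ▸ Finset.inf'_le _ (Finset.mem_univ i)
  rw [le_div_iff₀ hθpos, mul_comm]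
  exact M.mul_sum_pi_le_one hθ
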